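/- Let n = 2k+1 with k ≥ 1 and let 1 ≤ r ≤ k. Define the vector v indexed by the vertices of the middle-cube M_n by v(A) = f(A). Then M v = (k+1−r) · v, where M is the adjacency matrix of M_n; that is, v lies in the eigenspace of M for the eigenvalue k+1−r. -/

import Mathlib

open Finset

/-- Vertices of the middle-cube `M_n` (with `n = 2k+1`): subsets of `S = {1,…,n}`
(modeled as `Fin n`) of cardinality `k` or `k+1`. -/
abbrev MidVert (n k : ℕ) := {A : Finset (Fin n) // A.card = k ∨ A.card = k + 1}

/-- Adjacency matrix of the middle-cube: two distinct vertices `A`, `B` are adjacent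
iff `A ⊂ B` or `B ⊂ A`. -/
def midAdj (n k : ℕ) : Matrix (MidVert n k) (MidVert n k) ℝ :=
  fun A B => if A.1 ⊂ B.1 ∨ B.1 ⊂ A.1 then 1 else 0

/-! Write `f = powersetCardSum r g`. At a `(k+1)`-set `A` the neighbours are the sets `A \ {i}`,
and `∑_{i ∈ A} f (A \ {i})` counts every `r`-subset `B` of `A` once for each `i ∈ A \ B`,
which gives `(k + 1 - r) f A`. At a `k`-set `A` the neighbours are the sets `A ∪ {i}` with `i ∉ A`;
an `r`-subset of `A ∪ {i}` either lies in `A`, and these contribute `(k + 1) f A` in total, or is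
`D ∪ {i}` with `D` an `(r-1)`-subset of `A`. By the condition on `g`, summing `g (D ∪ {i})` over
`i ∉ A` gives minus the sum over `i ∈ A \ D`, and by double counting these add up to `-r f A`. -/

section PowersetCardSum

variable {α M : Type*} [DecidableEq α] [AddCommMonoid M]

def powersetCardSum (r : ℕ) (g : Finset α → M) (A : Finset α) : M :=
  ∑ B ∈ A.powersetCard r, g B

theorem powersetCardSum_insert {i : α} {A : Finset α} (hi : i ∉ A) (r : ℕ) (g : Finset α → M) :
    powersetCardSum (r + 1) g (insert i A) =
      powersetCardSum (r + 1) g A + powersetCardSum r (g ∘ insert i) A := by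
  have hinj : Set.InjOn (insert i) (A.powersetCard r : Set (Finset α)) := fun D hD E hE hDE => by
    rw [mem_coe, mem_powersetCard] at hD hE
    rw [← erase_insert (notMem_mono hD.1 hi), ← erase_insert (notMem_mono hE.1 hi), hDE]
  have hdisj : Disjoint (A.powersetCard (r + 1)) ((A.powersetCard r).image (insert i)) :=
    disjoint_left.2 fun C hC hC' => by
      obtain ⟨D, -, rfl⟩ := mem_image.1 hC'
      exact hi ((mem_powersetCard.1 hC).1 (mem_insert_self i D))
  rw [powersetCardSum, powersetCard_succ_insert hi, sum_union hdisj, sum_image hinj]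
  rfl

-- Stated additively, this needs neither `r ≤ #A` nor truncated subtraction.
theorem sum_powersetCardSum_erase_add_nsmul (r : ℕ) (g : Finset α → M) (A : Finset α) :
    ∑ i ∈ A, powersetCardSum r g (A.erase i) + r • powersetCardSum r g A =
      #A • powersetCardSum r g A := by
  have hswap : ∑ i ∈ A, powersetCardSum r g (A.erase i) =
      ∑ C ∈ A.powersetCard r, ∑ _i ∈ A \ C, g C :=
    sum_comm' fun i C => by
      simp only [mem_powersetCard, subset_erase, mem_sdiff]
      tauto
  rw [hswap, powersetCardSum, smul_sum, smul_sum, ← sum_add_distrib]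
  refine sum_congr rfl fun C hC => ?_
  obtain ⟨hCA, rfl⟩ := mem_powersetCard.1 hC
  rw [sum_const, ← add_nsmul, card_sdiff_add_card_eq_card hCA]

theorem sum_powersetCard_sum_sdiff_insert (r : ℕ) (g : Finset α → M) (A : Finset α) :
    ∑ D ∈ A.powersetCard r, ∑ i ∈ A \ D, g (insert i D) =
      (r + 1) • powersetCardSum (r + 1) g A := by
  calc ∑ D ∈ A.powersetCard r, ∑ i ∈ A \ D, g (insert i D)
      = ∑ C ∈ A.powersetCard (r + 1), ∑ _i ∈ C, g C := by
        rw [sum_sigma', sum_sigma']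
        refine sum_nbij' (fun p => ⟨insert p.2 p.1, p.2⟩) (fun q => ⟨q.1.erase q.2, q.2⟩)
          ?_ ?_ ?_ ?_ fun _ _ => rfl
        · rintro ⟨D, i⟩ hp
          simp only [mem_sigma, mem_powersetCard, mem_sdiff] at hp ⊢
          refine ⟨⟨insert_subset hp.2.1 hp.1.1, ?_⟩, mem_insert_self _ _⟩
          rw [card_insert_of_notMem hp.2.2, hp.1.2]
        · rintro ⟨C, i⟩ hq
          simp only [mem_sigma, mem_powersetCard, mem_sdiff] at hq ⊢
          refine ⟨⟨(erase_subset _ _).trans hq.1.1, ?_⟩, hq.1.1 hq.2, notMem_erase _ _⟩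
          rw [card_erase_of_mem hq.2, hq.1.2, Nat.add_sub_cancel]
        · rintro ⟨D, i⟩ hp
          simp only [mem_sigma, mem_sdiff] at hp
          simp [erase_insert hp.2.2]
        · rintro ⟨C, i⟩ hq
          simp only [mem_sigma] at hq
          simp [insert_erase hq.2]
    _ = (r + 1) • powersetCardSum (r + 1) g A := by
        rw [powersetCardSum, smul_sum]
        refine sum_congr rfl fun C hC => ?_
        rw [sum_const, (mem_powersetCard.1 hC).2]

theorem sum_powersetCardSum_insert_add_nsmul [Fintype α] {r : ℕ} {g : Finset α → M}
    (hg : ∀ D : Finset α, #D = r → ∑ i ∈ Dᶜ, g (insert i D) = 0) (A : Finset α) :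
    ∑ i ∈ Aᶜ, powersetCardSum (r + 1) g (insert i A) + (r + 1) • powersetCardSum (r + 1) g A =
      #Aᶜ • powersetCardSum (r + 1) g A := by
  have hsplit : ∀ D ∈ A.powersetCard r,
      ∑ i ∈ Aᶜ, g (insert i D) + ∑ i ∈ A \ D, g (insert i D) = 0 := fun D hD => by
    obtain ⟨hDA, hD⟩ := mem_powersetCard.1 hD
    rw [← hg D hD, add_comm, ← compl_sdiff_compl, sum_sdiff (compl_subset_compl.2 hDA)]
  rw [sum_congr rfl fun i hi => powersetCardSum_insert (mem_compl.1 hi) r g, sum_add_distrib,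
    sum_const, add_assoc, ← sum_powersetCard_sum_sdiff_insert]
  simp only [powersetCardSum, Function.comp_apply]
  rw [sum_comm, ← sum_add_distrib, sum_congr rfl hsplit, sum_const_zero, add_zero]

end PowersetCardSum

section MiddleCube

variable {n k : ℕ}

theorem midAdj_mulVec_apply (F : Finset (Fin n) → ℝ) (A : MidVert n k) :
    (midAdj n k).mulVec (fun B => F B.1) A =
      ∑ B with (#B = k ∨ #B = k + 1) ∧ (A.1 ⊂ B ∨ B ⊂ A.1), F B := by
  rw [← filter_filter, sum_filter,
    sum_subtype (p := fun B => #B = k ∨ #B = k + 1) (F := inferInstance) _ fun B => by simp]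
  simp only [Matrix.mulVec, dotProduct, midAdj, ite_mul, one_mul, zero_mul]

theorem filter_midAdj_of_card_eq {A : Finset (Fin n)} (hA : #A = k) :
    ({B | (#B = k ∨ #B = k + 1) ∧ (A ⊂ B ∨ B ⊂ A)} : Finset _) = Aᶜ.image (insert · A) := by
  ext B
  simp only [mem_filter, mem_univ, true_and, mem_image, mem_compl]
  rw [exists_eq_insert_iff]
  constructor
  · rintro ⟨hB, hAB | hBA⟩
    · have := card_lt_card hAB
      exact ⟨hAB.1, by omega⟩
    · have := card_lt_card hBA
      omega
  · rintro ⟨hAB, hcard⟩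
    exact ⟨by omega, Or.inl (hAB.ssubset_of_ne (by rintro rfl; omega))⟩

theorem filter_midAdj_of_card_eq_succ {A : Finset (Fin n)} (hA : #A = k + 1) :
    ({B | (#B = k ∨ #B = k + 1) ∧ (A ⊂ B ∨ B ⊂ A)} : Finset _) = A.image A.erase := by
  ext B
  simp only [mem_filter, mem_univ, true_and, mem_image]
  constructor
  · rintro ⟨hB, hAB | hBA⟩
    · have := card_lt_card hAB
      omega
    · have := card_lt_card hBA
      obtain ⟨i, hiB, rfl⟩ := exists_eq_insert_iff.2 ⟨hBA.1, by omega⟩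
      exact ⟨i, mem_insert_self i B, erase_insert hiB⟩
  · rintro ⟨i, hi, rfl⟩
    exact ⟨Or.inl (by rw [card_erase_of_mem hi, hA, Nat.add_sub_cancel]), Or.inr (erase_ssubset hi)⟩

theorem midAdj_mulVec_apply_of_card_eq (F : Finset (Fin n) → ℝ) {A : MidVert n k}
    (hA : #A.1 = k) :
    (midAdj n k).mulVec (fun B => F B.1) A = ∑ i ∈ A.1ᶜ, F (insert i A.1) := by
  rw [midAdj_mulVec_apply, filter_midAdj_of_card_eq hA,
    sum_image fun i hi j _ hij => (insert_inj (mem_compl.1 hi)).1 hij]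

theorem midAdj_mulVec_apply_of_card_eq_succ (F : Finset (Fin n) → ℝ) {A : MidVert n k}
    (hA : #A.1 = k + 1) :
    (midAdj n k).mulVec (fun B => F B.1) A = ∑ i ∈ A.1, F (A.1.erase i) := by
  rw [midAdj_mulVec_apply, filter_midAdj_of_card_eq_succ hA,
    sum_image fun i hi j _ hij => (erase_inj A.1 hi).1 hij]

end MiddleCube

theorem middle_cube_eigenvector_general (k r : ℕ) (hr : 1 ≤ r)
    (g : Finset (Fin (2 * k + 1)) → ℝ)
    (hg : ∀ R : Finset (Fin (2 * k + 1)), R.card = r - 1 →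
      ∑ i ∈ Rᶜ, g (insert i R) = 0) :
    (midAdj (2 * k + 1) k).mulVec
        (fun A : MidVert (2 * k + 1) k => ∑ B ∈ A.1.powersetCard r, g B) =
      ((k : ℝ) + 1 - r) •
        (fun A : MidVert (2 * k + 1) k => ∑ B ∈ A.1.powersetCard r, g B) := by
  obtain ⟨r, rfl⟩ : ∃ s, r = s + 1 := ⟨r - 1, by omega⟩
  change (midAdj _ k).mulVec (fun A : MidVert _ k => powersetCardSum (r + 1) g A.1) =
    _ • fun A : MidVert _ k => powersetCardSum (r + 1) g A.1
  funext A
  rw [Pi.smul_apply, smul_eq_mul]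
  rcases A.2 with hA | hA
  · have hcompl : #A.1ᶜ = k + 1 := by
      rw [card_compl, Fintype.card_fin, hA]
      omega
    have h := sum_powersetCardSum_insert_add_nsmul (fun D hD => hg D (by omega)) A.1
    rw [hcompl, ← midAdj_mulVec_apply_of_card_eq _ hA, nsmul_eq_mul, nsmul_eq_mul] at h
    push_cast at h ⊢
    linarith
  · have h := sum_powersetCardSum_erase_add_nsmul (r + 1) g A.1
    rw [hA, ← midAdj_mulVec_apply_of_card_eq_succ _ hA, nsmul_eq_mul, nsmul_eq_mul] at h
    push_cast at h ⊢
    linarith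

/-- Let `n = 2k+1` with `k ≥ 1` and `1 ≤ r ≤ k`, and let `g` assign a real number to
each `r`-subset of `S` such that for every `(r−1)`-subset `R` of `S`,
`∑_{i ∈ S∖R} g(R ∪ {i}) = 0`. Then the vector `v` indexed by the vertices of the
middle-cube with `v(A) = f(A) = ∑_{B ⊆ A, |B| = r} g(B)` satisfies
`M v = (k+1−r)·v`, i.e. `v` lies in the eigenspace of `M` for eigenvalue `k+1−r`. -/
theorem middle_cube_eigenvector (k r : ℕ) (hk : 1 ≤ k) (hr : 1 ≤ r) (hrk : r ≤ k)
    (g : Finset (Fin (2 * k + 1)) → ℝ)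
    (hg : ∀ R : Finset (Fin (2 * k + 1)), R.card = r - 1 →
      ∑ i ∈ Rᶜ, g (insert i R) = 0) :
    (midAdj (2 * k + 1) k).mulVec
        (fun A : MidVert (2 * k + 1) k => ∑ B ∈ A.1.powersetCard r, g B) =
      ((k : ℝ) + 1 - r) •
        (fun A : MidVert (2 * k + 1) k => ∑ B ∈ A.1.powersetCard r, g B) :=
  middle_cube_eigenvector_general k r hr g hg
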